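/- Let V carry a Hodge structure of weight k polarized by ψ. Then the subgroup K of the general linear group GL(V) consisting of all real-linear automorphisms g of V such that ψ(g v, g w) = ψ(v, w) for all v, w ∈ V and such that the complexification of g maps V^{p,q} into V^{p,q} for every (p,q), is a compact subgroup of GL(V) (with its standard topology). (This is the statement that the isotropy group K = P ∩ G_ℝ of a point of the period domain D is compact, so that D = G_ℝ/K.) -/

import Mathlib

/-!
The Hodge metric `Φ(v, w) = ∑ Re (i^{p-q} ψ(v^{p,q}, conj w^{p,q}))` is a positive definite
real form on `V` by the second Hodge–Riemann relation, and every `g ∈ K` preserves it: the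
complexification of `g` commutes with conjugation and, preserving each `V^{p,q}`, with the
Hodge projections. So `K` is a closed subset of the `Φ`-orthogonal group, which is bounded in
`End V` because `Φ` is coercive; preserving `Φ` also forces `g` to be injective, hence bijective.
-/

open TensorProduct

instance : RingHomSurjective (starRingEnd ℂ) :=
  ⟨fun x => ⟨star x, star_star x⟩⟩

/-- Conjugation on the complexification `ℂ ⊗[ℝ] V`, `z ⊗ v ↦ z̄ ⊗ v`,
as a `starRingEnd ℂ`-semilinear map. -/
noncomputable def conjC (V : Type*) [AddCommGroup V] [Module ℝ V] :
    (ℂ ⊗[ℝ] V) →ₛₗ[starRingEnd ℂ] (ℂ ⊗[ℝ] V) where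
  toFun := TensorProduct.map Complex.conjAe.toLinearMap LinearMap.id
  map_add' := map_add _
  map_smul' := by
    intro z x
    induction x using TensorProduct.induction_on with
    | zero => simp
    | tmul c v =>
        simp [TensorProduct.smul_tmul', TensorProduct.map_tmul, map_mul]
    | add x y hx hy =>
        simp only [smul_add, map_add]
        exact congrArg₂ (· + ·) hx hy

/-- The natural inclusion `V → ℂ ⊗[ℝ] V`, `v ↦ 1 ⊗ v`. -/
noncomputable def iotaC (V : Type*) [AddCommGroup V] [Module ℝ V] :
    V →ₗ[ℝ] ℂ ⊗[ℝ] V :=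
  TensorProduct.mk ℝ ℂ V 1

section Decomposition

open DirectSum

variable {ι R M : Type*} [DecidableEq ι] [Semiring R] [AddCommMonoid M] [Module R M]
  {ℳ : ι → Submodule R M} [Decomposition ℳ]

theorem DirectSum.decompose_linearMap_apply {f : M →ₗ[R] M} (hf : ∀ i, (ℳ i).map f ≤ ℳ i)
    (x : M) (i : ι) : (decompose ℳ (f x) i : M) = f (decompose ℳ x i) := by
  induction x using Decomposition.inductionOn ℳ with
  | zero => simp
  | @homogeneous j m =>
    have hfm : f m ∈ ℳ j := hf j ⟨m, m.2, rfl⟩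
    obtain rfl | hij := eq_or_ne j i
    · rw [decompose_of_mem_same ℳ hfm, decompose_of_mem_same ℳ m.2]
    · rw [decompose_of_mem_ne ℳ hfm hij, decompose_of_mem_ne ℳ m.2 hij, map_zero]
  | add x y hx hy => simp [hx, hy]

theorem DirectSum.exists_decompose_ne_zero {x : M} (hx : x ≠ 0) :
    ∃ i, (decompose ℳ x i : M) ≠ 0 := by
  by_contra! h
  apply hx
  have : decompose ℳ x = 0 := DFinsupp.ext fun i => Subtype.ext (h i)
  simpa using congrArg (decompose ℳ).symm this

end Decomposition

section Complexification

variable {V : Type*} [AddCommGroup V] [Module ℝ V]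

theorem iotaC_injective : Function.Injective (iotaC V) :=
  Module.Flat.tensorProduct_mk_injective ℝ V ℂ

theorem baseChange_iotaC (g : V →ₗ[ℝ] V) (v : V) :
    g.baseChange ℂ (iotaC V v) = iotaC V (g v) := rfl

theorem conjC_real_smul (r : ℝ) (x : ℂ ⊗[ℝ] V) : conjC V (r • x) = r • conjC V x := by
  rw [← algebraMap_smul ℂ r, map_smulₛₗ, Complex.coe_algebraMap, Complex.conj_ofReal,
    ← Complex.coe_algebraMap, algebraMap_smul]

theorem conjC_baseChange (g : V →ₗ[ℝ] V) (x : ℂ ⊗[ℝ] V) :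
    conjC V (g.baseChange ℂ x) = g.baseChange ℂ (conjC V x) := by
  induction x using TensorProduct.induction_on with
  | zero => simp
  | tmul c v => rfl
  | add x y hx hy => simp only [map_add, hx, hy]

theorem iotaC_ext₂ {B B' : (ℂ ⊗[ℝ] V) →ₗ[ℂ] (ℂ ⊗[ℝ] V) →ₗ[ℂ] ℂ}
    (h : ∀ v w, B (iotaC V v) (iotaC V w) = B' (iotaC V v) (iotaC V w)) : B = B' := by
  have tmul_eq (c : ℂ) (v : V) : c ⊗ₜ[ℝ] v = c • iotaC V v := by
    simp [iotaC, TensorProduct.smul_tmul']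
  refine TensorProduct.AlgebraTensorModule.ext fun c v => ?_
  refine TensorProduct.AlgebraTensorModule.ext fun d w => ?_
  simp [tmul_eq, h]

end Complexification

section HodgeForm

open DirectSum

variable {V : Type*} [AddCommGroup V] [Module ℝ V] (k : ℤ) (H : ℤ → Submodule ℂ (ℂ ⊗[ℝ] V))
  [Decomposition H] (F : Finset ℤ) (ψc : (ℂ ⊗[ℝ] V) →ₗ[ℂ] (ℂ ⊗[ℝ] V) →ₗ[ℂ] ℂ)

theorem decompose_real_smul (r : ℝ) (x : ℂ ⊗[ℝ] V) (p : ℤ) :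
    (decompose H (r • x) p : ℂ ⊗[ℝ] V) = r • (decompose H x p : ℂ ⊗[ℝ] V) := by
  simp only [← algebraMap_smul ℂ r, decompose_smul, DirectSum.smul_apply, Submodule.coe_smul]

/-- `H p` is `V^{p,k-p}`, so `i ^ (2 * p - k)` is the eigenvalue `i^{p-q}` of the Weil operator
`C` on it, and this is the real part of the Hodge metric `ψ(C v, conj w)`. -/
noncomputable def hodgeForm : LinearMap.BilinForm ℝ V :=
  (LinearMap.mk₂ ℝ (fun v w => ∑ p ∈ F, Complex.I ^ (2 * p - k) *
      ψc (decompose H (iotaC V v) p) (conjC V (decompose H (iotaC V w) p)))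
    (fun v v' w => by simp [mul_add, Finset.sum_add_distrib])
    (fun r v w => by
      simp [decompose_real_smul, LinearMap.map_smul_of_tower, Finset.smul_sum, mul_left_comm])
    (fun v w w' => by simp [mul_add, Finset.sum_add_distrib])
    (fun r v w => by
      simp [decompose_real_smul, conjC_real_smul, LinearMap.map_smul_of_tower, Finset.smul_sum,
        mul_left_comm])).compr₂ Complex.reLm

variable {k H F ψc}

theorem hodgeForm_apply (v w : V) :
    hodgeForm k H F ψc v w = ∑ p ∈ F, (Complex.I ^ (2 * p - k) *
      ψc (decompose H (iotaC V v) p) (conjC V (decompose H (iotaC V w) p))).re := by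
  simp [hodgeForm]

theorem hodgeForm_self_pos (hF : ∀ p, H p ≠ ⊥ → p ∈ F)
    (hHR2 : ∀ p : ℤ, ∀ x ∈ H p, x ≠ 0 → 0 < (Complex.I ^ (2 * p - k) * ψc x (conjC V x)).re)
    {v : V} (hv : v ≠ 0) : 0 < hodgeForm k H F ψc v v := by
  have hx : iotaC V v ≠ 0 := (map_ne_zero_iff _ iotaC_injective).mpr hv
  obtain ⟨p, hp⟩ := exists_decompose_ne_zero (ℳ := H) hx
  have hpF : p ∈ F := hF p fun h => hp (by simpa [h] using (decompose H (iotaC V v) p).2)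
  rw [hodgeForm_apply]
  refine Finset.sum_pos' (fun q _ => ?_) ⟨p, hpF, hHR2 p _ (Subtype.mem _) hp⟩
  obtain hq | hq := eq_or_ne (decompose H (iotaC V v) q : ℂ ⊗[ℝ] V) 0
  · simp [hq]
  · exact (hHR2 q _ (Subtype.mem _) hq).le

theorem hodgeForm_map_apply_map {ψ : LinearMap.BilinForm ℝ V}
    (hExt : ∀ v w : V, ψc (iotaC V v) (iotaC V w) = ψ v w)
    {g : V →ₗ[ℝ] V} (hψ : ∀ v w : V, ψ (g v) (g w) = ψ v w)
    (hH : ∀ p : ℤ, (H p).map (g.baseChange ℂ) ≤ H p) (v w : V) :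
    hodgeForm k H F ψc (g v) (g w) = hodgeForm k H F ψc v w := by
  have hψc (x y : ℂ ⊗[ℝ] V) : ψc (g.baseChange ℂ x) (g.baseChange ℂ y) = ψc x y :=
    LinearMap.congr_fun₂ (iotaC_ext₂ (B := ψc.compl₁₂ (g.baseChange ℂ) (g.baseChange ℂ))
      fun v w => by simp [baseChange_iotaC, hExt, hψ]) x y
  simp only [hodgeForm_apply, ← baseChange_iotaC, decompose_linearMap_apply hH, conjC_baseChange,
    hψc]

end HodgeForm

section Normed

variable {V : Type*} [NormedAddCommGroup V] [NormedSpace ℝ V]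

theorem isCoercive_of_forall_pos [FiniteDimensional ℝ V] {B : V →L[ℝ] V →L[ℝ] ℝ}
    (hB : ∀ v ≠ 0, 0 < B v v) : IsCoercive B := by
  rcases subsingleton_or_nontrivial V with hV | hV
  · exact ⟨1, one_pos, fun u => by simp [Subsingleton.elim u 0]⟩
  obtain ⟨u₀, hu₀, hmin⟩ := (isCompact_sphere (0 : V) 1).exists_isMinOn
    (NormedSpace.sphere_nonempty.mpr zero_le_one)
    (by fun_prop : Continuous fun u => B u u).continuousOn
  refine ⟨B u₀ u₀, hB u₀ (ne_zero_of_mem_unit_sphere ⟨u₀, hu₀⟩), fun u => ?_⟩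
  obtain rfl | hu := eq_or_ne u 0
  · simp
  have hnorm : ‖u‖ ≠ 0 := norm_ne_zero_iff.mpr hu
  have hunit : ‖u‖⁻¹ • u ∈ Metric.sphere (0 : V) 1 := by
    simp [norm_smul, hnorm]
  calc B u₀ u₀ * ‖u‖ * ‖u‖ ≤ B (‖u‖⁻¹ • u) (‖u‖⁻¹ • u) * ‖u‖ * ‖u‖ := by
        gcongr; exact hmin hunit
    _ = B u u := by simp only [map_smul, smul_apply, smul_eq_mul]; field_simp

theorem isBounded_setOf_forall_apply_self_eq {B : V →L[ℝ] V →L[ℝ] ℝ} (hB : IsCoercive B) :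
    Bornology.IsBounded {g : V →L[ℝ] V | ∀ v, B (g v) (g v) = B v v} := by
  obtain ⟨c, hc, hcB⟩ := hB
  refine (Metric.isBounded_closedBall (x := 0) (r := √(‖B‖ / c))).subset fun g hg => ?_
  rw [Metric.mem_closedBall, dist_zero_right]
  refine g.opNorm_le_bound (by positivity) fun v => ?_
  have hsq : ‖g v‖ ^ 2 ≤ ‖B‖ / c * ‖v‖ ^ 2 := by
    rw [div_mul_eq_mul_div, le_div_iff₀ hc]
    calc ‖g v‖ ^ 2 * c = c * ‖g v‖ * ‖g v‖ := by ring
      _ ≤ B (g v) (g v) := hcB (g v)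
      _ = B v v := hg v
      _ ≤ ‖B‖ * ‖v‖ * ‖v‖ := (le_abs_self _).trans (B.le_opNorm₂ v v)
      _ = ‖B‖ * ‖v‖ ^ 2 := by ring
  calc ‖g v‖ = √(‖g v‖ ^ 2) := (Real.sqrt_sq (norm_nonneg _)).symm
    _ ≤ √(‖B‖ / c * ‖v‖ ^ 2) := Real.sqrt_le_sqrt hsq
    _ = √(‖B‖ / c) * ‖v‖ := by
      rw [Real.sqrt_mul' _ (sq_nonneg _), Real.sqrt_sq (norm_nonneg _)]

variable [FiniteDimensional ℝ V]

theorem isClosed_setOf_forall_apply_apply_eq (B : LinearMap.BilinForm ℝ V) :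
    IsClosed {g : V →L[ℝ] V | ∀ v w, B (g v) (g w) = B v w} := by
  simp only [Set.ofPred_forall]
  refine isClosed_iInter fun v => isClosed_iInter fun w => isClosed_eq ?_ continuous_const
  simpa using
    (by fun_prop : Continuous fun g : V →L[ℝ] V => B.toContinuousBilinearMap (g v) (g w))

theorem isClosed_setOf_map_baseChange_le (N : Submodule ℂ (ℂ ⊗[ℝ] V)) :
    IsClosed {g : V →L[ℝ] V | N.map ((g : V →ₗ[ℝ] V).baseChange ℂ) ≤ N} := by
  let S : Submodule ℝ (V →L[ℝ] V) :=
    { carrier := {g | N.map ((g : V →ₗ[ℝ] V).baseChange ℂ) ≤ N}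
      add_mem' := by
        rintro g h hg hh _ ⟨x, hx, rfl⟩
        simpa [LinearMap.baseChange_add] using N.add_mem (hg ⟨x, hx, rfl⟩) (hh ⟨x, hx, rfl⟩)
      zero_mem' := by
        rintro _ ⟨x, -, rfl⟩
        simp
      smul_mem' := by
        rintro r g hg _ ⟨x, hx, rfl⟩
        simpa [LinearMap.baseChange_smul] using N.smul_of_tower_mem r (hg ⟨x, hx, rfl⟩) }
  exact S.closed_of_finiteDimensional

end Normed

theorem injective_of_forall_apply_self_eq {V : Type*} [AddCommGroup V] [Module ℝ V]
    {B : LinearMap.BilinForm ℝ V} (hB : ∀ v ≠ 0, 0 < B v v) {g : V →ₗ[ℝ] V}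
    (hg : ∀ v, B (g v) (g v) = B v v) : Function.Injective g := by
  refine (injective_iff_map_eq_zero g).mpr fun v hv => ?_
  by_contra hne
  simpa [← hg v, hv] using hB v hne

theorem stmt11_general {V : Type*} [NormedAddCommGroup V] [NormedSpace ℝ V]
    [FiniteDimensional ℝ V]
    (k : ℤ) (H : ℤ → Submodule ℂ (ℂ ⊗[ℝ] V))
    (hInternal : DirectSum.IsInternal H)
    (hFinite : {p : ℤ | H p ≠ ⊥}.Finite)
    (ψ : V →ₗ[ℝ] V →ₗ[ℝ] ℝ)
    (ψc : (ℂ ⊗[ℝ] V) →ₗ[ℂ] (ℂ ⊗[ℝ] V) →ₗ[ℂ] ℂ)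
    (hExt : ∀ v w : V, ψc (iotaC V v) (iotaC V w) = (ψ v w : ℂ))
    (hHR2 : ∀ p : ℤ, ∀ v ∈ H p, v ≠ 0 →
        0 < (Complex.I ^ (2 * p - k) * ψc v (conjC V v)).re ∧
          (Complex.I ^ (2 * p - k) * ψc v (conjC V v)).im = 0) :
    IsCompact {g : V →L[ℝ] V | Function.Bijective g ∧
      (∀ v w : V, ψ (g v) (g w) = ψ v w) ∧
      ∀ p : ℤ, (H p).map (LinearMap.baseChange ℂ (g : V →ₗ[ℝ] V)) ≤ H p} := by
  let _ := hInternal.chooseDecomposition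
  set Φ := hodgeForm k H hFinite.toFinset ψc
  have hΦ_pos : ∀ v ≠ 0, 0 < Φ v v := fun v =>
    hodgeForm_self_pos (fun p => hFinite.mem_toFinset.mpr) (fun p x hx hx0 => (hHR2 p x hx hx0).1)
  have hK : {g : V →L[ℝ] V | Function.Bijective g ∧
      (∀ v w : V, ψ (g v) (g w) = ψ v w) ∧
      ∀ p : ℤ, (H p).map (LinearMap.baseChange ℂ (g : V →ₗ[ℝ] V)) ≤ H p} =
      {g : V →L[ℝ] V | ∀ v w : V, ψ (g v) (g w) = ψ v w} ∩
        ⋂ p, {g : V →L[ℝ] V | (H p).map (LinearMap.baseChange ℂ (g : V →ₗ[ℝ] V)) ≤ H p} := by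
    ext g
    simp only [Set.mem_ofPred_eq, Set.mem_inter_iff, Set.mem_iInter]
    refine ⟨fun ⟨_, hψ, hH⟩ => ⟨hψ, hH⟩, fun ⟨hψ, hH⟩ => ⟨?_, hψ, hH⟩⟩
    have hinj := injective_of_forall_apply_self_eq hΦ_pos (g := g)
      fun v => hodgeForm_map_apply_map hExt hψ hH v v
    exact ⟨hinj, LinearMap.injective_iff_surjective.mp hinj⟩
  rw [hK]
  refine Metric.isCompact_of_isClosed_isBounded ((isClosed_setOf_forall_apply_apply_eq ψ).inter
    (isClosed_iInter fun p => isClosed_setOf_map_baseChange_le (H p))) ?_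
  refine (isBounded_setOf_forall_apply_self_eq
    (isCoercive_of_forall_pos (B := Φ.toContinuousBilinearMap) hΦ_pos)).subset ?_
  rintro g ⟨hψ, hH⟩ v
  exact hodgeForm_map_apply_map hExt hψ (Set.mem_iInter.mp hH) v v

/-- Let `V` carry a Hodge structure of weight `k` polarized by `ψ`.
Then the subgroup `K` of `GL(V)` of all real-linear automorphisms `g` of `V` preserving
`ψ` and whose complexification maps `V^{p,q}` into `V^{p,q}` for every `(p,q)` is a
compact subgroup of `GL(V)` in its standard topology (here `V` is given a norm; all
norms on the finite-dimensional space `V` induce the same, standard, topology). -/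
theorem stmt11 {V : Type*} [NormedAddCommGroup V] [NormedSpace ℝ V]
    [FiniteDimensional ℝ V]
    (k : ℤ) (H : ℤ → Submodule ℂ (ℂ ⊗[ℝ] V))
    (hInternal : DirectSum.IsInternal H)
    (hFinite : {p : ℤ | H p ≠ ⊥}.Finite)
    (hConj : ∀ p : ℤ, (H p).map (conjC V) = H (k - p))
    (ψ : V →ₗ[ℝ] V →ₗ[ℝ] ℝ)
    (hsymm : ∀ v w : V, ψ w v = (-1 : ℝ) ^ k * ψ v w)
    (ψc : (ℂ ⊗[ℝ] V) →ₗ[ℂ] (ℂ ⊗[ℝ] V) →ₗ[ℂ] ℂ)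
    (hExt : ∀ v w : V, ψc (iotaC V v) (iotaC V w) = (ψ v w : ℂ))
    (hHR1 : ∀ p r : ℤ, r ≠ k - p → ∀ v ∈ H p, ∀ w ∈ H r, ψc v w = 0)
    (hHR2 : ∀ p : ℤ, ∀ v ∈ H p, v ≠ 0 →
        0 < (Complex.I ^ (2 * p - k) * ψc v (conjC V v)).re ∧
          (Complex.I ^ (2 * p - k) * ψc v (conjC V v)).im = 0) :
    IsCompact {g : V →L[ℝ] V | Function.Bijective g ∧
      (∀ v w : V, ψ (g v) (g w) = ψ v w) ∧
      ∀ p : ℤ, (H p).map (LinearMap.baseChange ℂ (g : V →ₗ[ℝ] V)) ≤ H p} :=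
  stmt11_general k H hInternal hFinite ψ ψc hExt hHR2
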